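/- Let Ξ be a d×d real matrix for which 0 is a simple eigenvalue, all other eigenvalues of the complexification of Ξ have strictly negative real part, and let η ∈ ℝ^d be a unit vector with Ξη = 0 and ηᵀΞ = 0. Let v, w ∈ ℝ^d be nonzero vectors with (ηᵀv)(wᵀη) > 0. Then there exists t₀ > 0 such that for every t ∈ (0, t₀) the matrix Ξ + t·v wᵀ has an eigenvalue (of its complexification) with strictly positive real part. -/

import Mathlib

open Matrix
open Polynomial

section StmtAux
variable {d : ℕ}

lemma eval_charpoly' (M : Matrix (Fin d) (Fin d) ℝ) (x : ℝ) :
    M.charpoly.eval x = (x • (1 : Matrix (Fin d) (Fin d) ℝ) - M).det := by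
  rw [Matrix.charpoly, eval_det, matPolyEquiv_charmatrix]
  simp [smul_one_eq_diagonal, scalar_apply]

lemma cont_adj (Ξ : Matrix (Fin d) (Fin d) ℝ) :
    Continuous fun x : ℝ => adjugate (x • (1 : Matrix (Fin d) (Fin d) ℝ) - Ξ) :=
  Continuous.matrix_adjugate ((continuous_id.smul continuous_const).sub continuous_const)

lemma dense_good (Ξ : Matrix (Fin d) (Fin d) ℝ) :
    Dense {x : ℝ | Ξ.charpoly.eval x ≠ 0} := by
  have hne : Ξ.charpoly ≠ 0 := (Matrix.charpoly_monic Ξ).ne_zero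
  have hfin : Set.Finite {x : ℝ | IsRoot Ξ.charpoly x} := finite_setOf_isRoot hne
  exact hfin.countable.dense_compl ℝ

lemma adj_mulVec_eta (Ξ : Matrix (Fin d) (Fin d) ℝ) (η : Fin d → ℝ)
    (hleft : Ξ.mulVec η = 0) (hp0 : Ξ.charpoly.eval 0 = 0) :
    adjugate (-Ξ) *ᵥ η = (Ξ.charpoly.coeff 1) • η := by
  set p := Ξ.charpoly with hp
  have hEq : ∀ x : ℝ, x ≠ 0 →
      adjugate (x • (1 : Matrix (Fin d) (Fin d) ℝ) - Ξ) *ᵥ η = (p.divX.eval x) • η := by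
    intro x hx
    set M : Matrix (Fin d) (Fin d) ℝ := x • 1 - Ξ with hM
    have hMη : M *ᵥ η = x • η := by
      rw [hM, Matrix.sub_mulVec, Matrix.smul_mulVec, Matrix.one_mulVec, hleft, sub_zero]
    have h1 : x • (adjugate M *ᵥ η) = M.det • η := by
      rw [← Matrix.mulVec_smul, ← hMη, Matrix.mulVec_mulVec, Matrix.adjugate_mul,
        Matrix.smul_mulVec, Matrix.one_mulVec]
    have hc0 : p.coeff 0 = 0 := by rw [coeff_zero_eq_eval_zero]; exact hp0
    have hsplit : p = p.divX * X := by
      nth_rewrite 1 [← p.divX_mul_X_add]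
      rw [hc0, map_zero, add_zero]
    have hdet : M.det = x * p.divX.eval x := by
      rw [← eval_charpoly' Ξ x]
      conv_lhs => rw [← hp, hsplit]
      rw [eval_mul, eval_X]
      ring
    funext i
    have hthis := congrFun h1 i
    simp only [Pi.smul_apply, smul_eq_mul, hdet, mul_assoc] at hthis
    simp only [Pi.smul_apply, smul_eq_mul]
    exact mul_left_cancel₀ hx hthis
  have hc1 : Continuous fun x : ℝ =>
      adjugate (x • (1 : Matrix (Fin d) (Fin d) ℝ) - Ξ) *ᵥ η :=
    (cont_adj Ξ).matrix_mulVec continuous_const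
  have hc2 : Continuous fun x : ℝ => (p.divX.eval x) • η :=
    (p.divX.continuous).smul continuous_const
  have hdense : Dense ({0}ᶜ : Set ℝ) := dense_compl_singleton 0
  have := Continuous.ext_on hdense hc1 hc2 (fun x hx => hEq x hx)
  have h0 := congrFun this 0
  have hq0 : p.divX.eval 0 = p.coeff 1 := by
    rw [← coeff_zero_eq_eval_zero, coeff_divX]
  simp only [zero_smul, zero_sub, hq0] at h0
  exact h0


lemma charpoly_transpose' (Ξ : Matrix (Fin d) (Fin d) ℝ) : Ξᵀ.charpoly = Ξ.charpoly := by
  rw [Matrix.charpoly, Matrix.charpoly, ← Matrix.det_transpose (charmatrix Ξ)]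
  congr 1
  ext i j
  by_cases h : i = j
  · subst h; simp
  · simp [charmatrix_apply_ne _ _ _ h, charmatrix_apply_ne _ _ _ (Ne.symm h),
      Matrix.transpose_apply]

lemma eta_vecMul_adj (Ξ : Matrix (Fin d) (Fin d) ℝ) (η : Fin d → ℝ)
    (hright : Matrix.vecMul η Ξ = 0) (hp0 : Ξ.charpoly.eval 0 = 0) :
    Matrix.vecMul η (adjugate (-Ξ)) = (Ξ.charpoly.coeff 1) • η := by
  have h1 : Ξᵀ.mulVec η = 0 := by
    rw [Matrix.mulVec_transpose]; exact hright
  have h2 : Ξᵀ.charpoly.eval 0 = 0 := by rw [charpoly_transpose']; exact hp0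
  have h := adj_mulVec_eta Ξᵀ η h1 h2
  rw [charpoly_transpose'] at h
  calc Matrix.vecMul η (adjugate (-Ξ))
      = (adjugate (-Ξ))ᵀ *ᵥ η := by
        rw [← Matrix.vecMul_transpose, Matrix.transpose_transpose]
    _ = adjugate (-Ξᵀ) *ᵥ η := by rw [Matrix.adjugate_transpose, Matrix.transpose_neg]
    _ = (Ξ.charpoly.coeff 1) • η := h

lemma ker_span (Ξ : Matrix (Fin d) (Fin d) ℝ) (η : Fin d → ℝ) (hη : η ≠ 0)
    (hleft : Ξ *ᵥ η = 0)
    (q0 : ℝ) (hq0 : q0 ≠ 0) (hAη : adjugate (-Ξ) *ᵥ η = q0 • η)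
    (u : Fin d → ℝ) (hu : Ξ *ᵥ u = 0) : ∃ c : ℝ, u = c • η := by
  by_cases hdep : ∃ c : ℝ, u = c • η
  · exact hdep
  exfalso
  have hind : ∀ a b : ℝ, a • u + b • η = 0 → a = 0 ∧ b = 0 := by
    intro a b hab
    by_cases ha : a = 0
    · subst ha
      refine ⟨rfl, ?_⟩
      rw [zero_smul, zero_add] at hab
      rcases smul_eq_zero.mp hab with h | h
      · exact h
      · exact absurd h hη
    · exfalso
      apply hdep
      refine ⟨-b / a, ?_⟩
      have : a • u = (-b) • η := by
        rw [neg_smul]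
        linear_combination (norm := module) hab
      funext i
      have := congrFun this i
      simp only [Pi.smul_apply, smul_eq_mul] at this ⊢
      field_simp
      linarith [this]
  -- every kernel vector y with y i = 0 kills the updateRow determinant
  have hdetrow : ∀ (i j : Fin d) (y : Fin d → ℝ), y ≠ 0 → Ξ *ᵥ y = 0 → y i = 0 →
      (Ξ.updateRow j (Pi.single i 1)).det = 0 := by
    intro i j y hy hker hyi
    rw [← Matrix.exists_mulVec_eq_zero_iff]
    refine ⟨y, hy, ?_⟩
    funext k
    by_cases hk : k = j
    · subst hk
      show Matrix.updateRow Ξ k (Pi.single i 1) k ⬝ᵥ y = 0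
      rw [Matrix.updateRow_self, single_dotProduct, one_mul, hyi]
    · show Matrix.updateRow Ξ j (Pi.single i 1) k ⬝ᵥ y = 0
      rw [Matrix.updateRow_ne hk]
      exact congrFun hker k
  have hadj : adjugate Ξ = 0 := by
    ext i j
    rw [Matrix.adjugate_apply, Matrix.zero_apply]
    by_cases hzero : η i = 0 ∧ u i = 0
    · have hune : u ≠ 0 := fun h => hdep ⟨0, by rw [h, zero_smul]⟩
      exact hdetrow i j u hune hu hzero.2
    · set y : Fin d → ℝ := η i • u - u i • η with hy
      have hyker : Ξ *ᵥ y = 0 := by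
        rw [hy, Matrix.mulVec_sub, Matrix.mulVec_smul, Matrix.mulVec_smul, hu, hleft]
        simp
      have hyi : y i = 0 := by
        simp only [hy, Pi.sub_apply, Pi.smul_apply, smul_eq_mul]
        ring
      have hyne : y ≠ 0 := by
        intro h0
        have : η i • u + (-(u i)) • η = 0 := by
          rw [neg_smul, ← sub_eq_add_neg]
          exact h0
        obtain ⟨h1, h2⟩ := hind _ _ this
        exact hzero ⟨h1, by linarith [neg_eq_zero.mp h2]⟩
      exact hdetrow i j y hyne hyker hyi
  have hadjneg : adjugate (-Ξ) = 0 := by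
    have : -Ξ = (-1 : ℝ) • Ξ := by rw [neg_one_smul]
    rw [this, Matrix.adjugate_smul, hadj, smul_zero]
  rw [hadjneg] at hAη
  have : q0 • η = 0 := by rw [← hAη]; simp [Matrix.zero_mulVec]
  rcases smul_eq_zero.mp this with h | h
  · exact hq0 h
  · exact hη h

lemma adj_structure (Ξ : Matrix (Fin d) (Fin d) ℝ) (η : Fin d → ℝ)
    (hη2 : η ⬝ᵥ η = 1) (hp0 : Ξ.charpoly.eval 0 = 0)
    (hker : ∀ u, Ξ *ᵥ u = 0 → ∃ c : ℝ, u = c • η)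
    (hηA : Matrix.vecMul η (adjugate (-Ξ)) = (Ξ.charpoly.coeff 1) • η) :
    adjugate (-Ξ) = (Ξ.charpoly.coeff 1) • vecMulVec η η := by
  set q0 := Ξ.charpoly.coeff 1 with hq0def
  set A := adjugate (-Ξ) with hA
  have hdet0 : (-Ξ).det = 0 := by
    have h := eval_charpoly' Ξ 0
    rw [zero_smul, zero_sub, hp0] at h
    exact h.symm
  have hXA : Ξ * A = 0 := by
    have h := Matrix.mul_adjugate (-Ξ)
    rw [hdet0, zero_smul, Matrix.neg_mul] at h
    rw [← neg_neg (Ξ * A), h, neg_zero]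
  ext i j
  have hkera : Ξ *ᵥ (A *ᵥ Pi.single j 1) = 0 := by
    rw [Matrix.mulVec_mulVec, hXA, Matrix.zero_mulVec]
  obtain ⟨c, hc⟩ := hker _ hkera
  have h1 : η ⬝ᵥ (A *ᵥ Pi.single j 1) = q0 * η j := by
    rw [Matrix.dotProduct_mulVec, hηA, smul_dotProduct, dotProduct_single]
    simp [mul_comm]
  have h2 : η ⬝ᵥ (A *ᵥ Pi.single j 1) = c := by
    rw [hc, dotProduct_smul, hη2]
    simp
  have hcval : c = q0 * η j := by rw [← h2, h1]
  have hAij : A i j = c * η i := by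
    have := congrFun hc i
    rw [Matrix.mulVec_single] at this
    simpa using this
  rw [hAij, hcval]
  simp [Matrix.vecMulVec_apply]
  ring

lemma det_pert_good {d : ℕ} (Ξ : Matrix (Fin d) (Fin d) ℝ) (v w : Fin d → ℝ) (t x : ℝ)
    (hx : Ξ.charpoly.eval x ≠ 0) :
    ((Ξ + t • vecMulVec v w).charpoly).eval x
      = Ξ.charpoly.eval x - t * (w ⬝ᵥ (adjugate (x • 1 - Ξ)) *ᵥ v) := by
  set M : Matrix (Fin d) (Fin d) ℝ := x • 1 - Ξ with hM
  have hdetM : M.det = Ξ.charpoly.eval x := (eval_charpoly' Ξ x).symm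
  have hdet : IsUnit M.det := isUnit_iff_ne_zero.mpr (by rw [hdetM]; exact hx)
  have key : x • (1 : Matrix (Fin d) (Fin d) ℝ) - (Ξ + t • vecMulVec v w)
      = M + replicateCol (Fin 1) (-(t • v)) * replicateRow (Fin 1) w := by
    rw [vecMulVec_eq (Fin 1) v w]
    ext i j
    simp only [Matrix.sub_apply, Matrix.add_apply, Matrix.smul_apply, Matrix.mul_apply,
      Matrix.replicateCol_apply, Matrix.replicateRow_apply, Finset.univ_unique, Finset.sum_singleton, hM,
      Pi.neg_apply, Pi.smul_apply, smul_eq_mul]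
    ring
  rw [eval_charpoly', eval_charpoly', key]
  erw [Matrix.det_add_replicateCol_mul_replicateRow (ι := Fin 1) hdet]
  rw [Matrix.mul_assoc,
    ← replicateCol_mulVec]
  have h1 : (1 + replicateRow (Fin 1) w * replicateCol (Fin 1) (M⁻¹ *ᵥ -(t • v))).det
      = 1 + w ⬝ᵥ (M⁻¹ *ᵥ -(t • v)) := by
    rw [det_fin_one]
    simp [Matrix.add_apply, Matrix.replicateRow_mul_replicateCol_apply]
  trans M.det * (1 + w ⬝ᵥ (M⁻¹ *ᵥ -(t • v)))
  · exact congrArg (M.det * ·) h1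
  have h2 : w ⬝ᵥ (M⁻¹ *ᵥ -(t • v)) = -(t * (w ⬝ᵥ (M⁻¹ *ᵥ v))) := by
    rw [Matrix.mulVec_neg, Matrix.mulVec_smul, dotProduct_neg, dotProduct_smul]
    simp [smul_eq_mul]
  have h3 : M.det * (w ⬝ᵥ (M⁻¹ *ᵥ v)) = w ⬝ᵥ (adjugate M *ᵥ v) := by
    have : adjugate M = M.det • M⁻¹ := by
      rw [Matrix.inv_def, smul_smul, Ring.mul_inverse_cancel _ hdet, one_smul]
    rw [this, Matrix.smul_mulVec, dotProduct_smul, smul_eq_mul]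
  rw [h2, ← hM]
  linear_combination (-t) * h3


lemma det_pert_all (Ξ : Matrix (Fin d) (Fin d) ℝ) (v w : Fin d → ℝ) (t : ℝ) (x : ℝ) :
    ((Ξ + t • vecMulVec v w).charpoly).eval x
      = Ξ.charpoly.eval x - t * (w ⬝ᵥ (adjugate (x • 1 - Ξ)) *ᵥ v) := by
  have hc1 : Continuous fun x : ℝ => ((Ξ + t • vecMulVec v w).charpoly).eval x :=
    Polynomial.continuous _
  have hc2 : Continuous fun x : ℝ =>
      Ξ.charpoly.eval x - t * (w ⬝ᵥ (adjugate (x • 1 - Ξ)) *ᵥ v) := by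
    refine (Polynomial.continuous _).sub (continuous_const.mul ?_)
    exact Continuous.dotProduct continuous_const
      ((cont_adj Ξ).matrix_mulVec continuous_const)
  have hext := Continuous.ext_on (dense_good Ξ) hc1 hc2
    (fun y hy => det_pert_good Ξ v w t y hy)
  exact congrFun hext x

lemma exists_pos_root {f : Polynomial ℝ} (h0 : 0 < f.degree) (hlead : 0 ≤ f.leadingCoeff)
    (hneg : f.eval 0 < 0) : ∃ r > (0:ℝ), f.eval r = 0 := by
  have ht := f.tendsto_atTop_of_leadingCoeff_nonneg h0 hlead
  obtain ⟨B, hB1, hB2⟩ := ((ht.eventually_gt_atTop 0).and (Filter.eventually_gt_atTop 0)).exists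
  have hmem : (0:ℝ) ∈ Set.Ioo (f.eval 0) (f.eval B) := ⟨hneg, hB1⟩
  have hsub := intermediate_value_Ioo hB2.le (f.continuous.continuousOn (s := Set.Icc 0 B))
  obtain ⟨r, hr, hr0⟩ := hsub hmem
  exact ⟨r, hr.1, hr0⟩

lemma root_transfer (M : Matrix (Fin d) (Fin d) ℝ) (r : ℝ) (hr : M.charpoly.eval r = 0) :
    Polynomial.IsRoot ((M.map Complex.ofReal).charpoly) (r : ℂ) := by
  have hmap : (M.map Complex.ofReal).charpoly
      = M.charpoly.map (Complex.ofRealHom : ℝ →+* ℂ) :=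
    Matrix.charpoly_map M Complex.ofRealHom
  rw [hmap]
  show eval ((Complex.ofRealHom : ℝ →+* ℂ) r) (M.charpoly.map Complex.ofRealHom) = 0
  rw [Polynomial.eval_map, Polynomial.eval₂_at_apply, hr, map_zero]

lemma q0_pos (hd : 1 ≤ d) (Ξ : Matrix (Fin d) (Fin d) ℝ)
    (hsimple : Polynomial.rootMultiplicity (0 : ℝ) Ξ.charpoly = 1)
    (hother : ∀ μ : ℂ, Polynomial.IsRoot ((Ξ.map Complex.ofReal).charpoly) μ →
      μ ≠ 0 → μ.re < 0) :
    0 < Ξ.charpoly.coeff 1 := by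
  haveI : Nonempty (Fin d) := ⟨⟨0, hd⟩⟩
  set p := Ξ.charpoly with hp
  have hmono : p.Monic := Matrix.charpoly_monic Ξ
  have hpne : p ≠ 0 := hmono.ne_zero
  have hdeg : p.natDegree = d := by
    rw [hp, Matrix.charpoly_natDegree_eq_dim, Fintype.card_fin]
  have htr : p.natTrailingDegree = 1 := by
    rw [← Polynomial.rootMultiplicity_eq_natTrailingDegree']
    exact hsimple
  have hq0ne : p.coeff 1 ≠ 0 := by
    have h1 : p.coeff 1 = p.trailingCoeff := by
      rw [Polynomial.trailingCoeff, htr]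
    rw [h1]
    exact mt Polynomial.trailingCoeff_eq_zero.mp hpne
  have hp0 : p.eval 0 = 0 := by
    rw [← Polynomial.coeff_zero_eq_eval_zero]
    exact Polynomial.coeff_eq_zero_of_lt_natTrailingDegree (by rw [htr]; norm_num)
  have hrootneg : ∀ r : ℝ, p.eval r = 0 → r ≤ 0 := by
    intro r hr
    by_contra hcon
    push_neg at hcon
    have hroot := root_transfer Ξ r hr
    have := hother r hroot (by exact_mod_cast hcon.ne')
    rw [Complex.ofReal_re] at this
    linarith
  rcases lt_or_gt_of_ne hq0ne with hneg | hpos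
  swap
  · exact hpos
  exfalso
  -- q := p.divX
  set q := p.divX with hqdef
  have hqd : q.natDegree = d - 1 := by
    rw [hqdef, Polynomial.natDegree_divX_eq_natDegree_tsub_one, hdeg]
  have hqlead : q.coeff (d - 1) = 1 := by
    rw [hqdef, Polynomial.coeff_divX, Nat.sub_add_cancel hd, ← hdeg]
    exact hmono.coeff_natDegree
  by_cases hd1 : d = 1
  · -- then q.coeff 0 = 1 but q.coeff 0 = p.coeff 1 < 0
    have : q.coeff 0 = 1 := by simpa [hd1] using hqlead
    rw [hqdef, Polynomial.coeff_divX] at this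
    rw [this] at hneg
    norm_num at hneg
  · have hd2 : 2 ≤ d := by omega
    have hqne : q ≠ 0 := fun h => by simp [h] at hqlead
    have hdegpos : 0 < q.degree := by
      rw [Polynomial.degree_eq_natDegree hqne, hqd]
      exact_mod_cast Nat.sub_pos_of_lt hd2
    have hlead : 0 ≤ q.leadingCoeff := by
      rw [Polynomial.leadingCoeff, hqd, hqlead]
      norm_num
    have hqeval0 : q.eval 0 < 0 := by
      rw [← Polynomial.coeff_zero_eq_eval_zero, hqdef, Polynomial.coeff_divX]
      exact hneg
    obtain ⟨r, hrpos, hr0⟩ := exists_pos_root hdegpos hlead hqeval0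
    have hsplit : p = q * X := by
      nth_rewrite 1 [← p.divX_mul_X_add]
      rw [← Polynomial.coeff_zero_eq_eval_zero] at hp0
      rw [hp0, map_zero, add_zero]
    have hpr : p.eval r = 0 := by
      rw [hsplit, Polynomial.eval_mul, hr0, zero_mul]
    exact absurd (hrootneg r hpr) (not_le.mpr hrpos)

end StmtAux

/-- if `0` is a simple eigenvalue of `Ξ`, all other eigenvalues lie in
the open left half plane, and `(ηᵀv)(wᵀη) > 0`, then `Ξ + t v wᵀ` has an eigenvalue
with strictly positive real part for all sufficiently small `t > 0`. -/
theorem stmt_2 {d : ℕ} (hd : 1 ≤ d) (Ξ : Matrix (Fin d) (Fin d) ℝ)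
    (η v w : Fin d → ℝ)
    (hsimple : Polynomial.rootMultiplicity (0 : ℝ) Ξ.charpoly = 1)
    (hother : ∀ μ : ℂ, Polynomial.IsRoot (Ξ.map Complex.ofReal).charpoly μ →
      μ ≠ 0 → μ.re < 0)
    (hnorm : Real.sqrt (∑ i, η i ^ 2) = 1)
    (hleft : Ξ.mulVec η = 0) (hright : Matrix.vecMul η Ξ = 0)
    (hv : v ≠ 0) (hw : w ≠ 0)
    (hsign : 0 < (η ⬝ᵥ v) * (w ⬝ᵥ η)) :
    ∃ t₀ > (0 : ℝ), ∀ t ∈ Set.Ioo (0 : ℝ) t₀,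
      ∃ μ : ℂ,
        Polynomial.IsRoot ((Ξ + t • Matrix.vecMulVec v w).map Complex.ofReal).charpoly μ ∧
        0 < μ.re := by
  haveI : Nonempty (Fin d) := ⟨⟨0, hd⟩⟩
  have hq0pos : 0 < Ξ.charpoly.coeff 1 := q0_pos hd Ξ hsimple hother
  have htr : Ξ.charpoly.natTrailingDegree = 1 := by
    rw [← Polynomial.rootMultiplicity_eq_natTrailingDegree']
    exact hsimple
  have hp0 : Ξ.charpoly.eval 0 = 0 := by
    rw [← Polynomial.coeff_zero_eq_eval_zero]
    exact Polynomial.coeff_eq_zero_of_lt_natTrailingDegree (by rw [htr]; norm_num)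
  have hη2 : η ⬝ᵥ η = 1 := by
    have hnn : (0:ℝ) ≤ ∑ i, η i ^ 2 := Finset.sum_nonneg fun i _ => sq_nonneg _
    have hs : ∑ i, η i ^ 2 = 1 := by
      have := Real.sq_sqrt hnn
      rw [hnorm] at this
      simpa using this.symm
    rw [dotProduct]
    simpa [sq] using hs
  have hη : η ≠ 0 := by
    intro h
    rw [h] at hη2
    simp [dotProduct] at hη2
  have hAη := adj_mulVec_eta Ξ η hleft hp0
  have hηA := eta_vecMul_adj Ξ η hright hp0
  have hker := ker_span Ξ η hη hleft (Ξ.charpoly.coeff 1) hq0pos.ne' hAη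
  have hstruct := adj_structure Ξ η hη2 hp0 hker hηA
  refine ⟨1, one_pos, ?_⟩
  intro t ht
  obtain ⟨ht0, -⟩ := ht
  set N := Ξ + t • Matrix.vecMulVec v w with hN
  have hvmv : (Ξ.charpoly.coeff 1 • vecMulVec η η) *ᵥ v
      = (Ξ.charpoly.coeff 1 * (η ⬝ᵥ v)) • η := by
    funext i
    simp only [Matrix.mulVec, dotProduct, Pi.smul_apply, smul_eq_mul]
    rw [Finset.mul_sum, Finset.sum_mul]
    apply Finset.sum_congr rfl
    intro j _
    simp only [Matrix.smul_apply, Matrix.vecMulVec_apply, smul_eq_mul]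
    ring
  have heval0 : N.charpoly.eval 0
      = -(t * (Ξ.charpoly.coeff 1 * ((η ⬝ᵥ v) * (w ⬝ᵥ η)))) := by
    have h := det_pert_all Ξ v w t 0
    rw [zero_smul, zero_sub] at h
    rw [hN, h, hp0, hstruct, hvmv, zero_sub]
    rw [dotProduct_smul, smul_eq_mul]
    ring
  have hneg : N.charpoly.eval 0 < 0 := by
    rw [heval0]
    have : 0 < t * (Ξ.charpoly.coeff 1 * ((η ⬝ᵥ v) * (w ⬝ᵥ η))) := by positivity
    linarith
  have hmono : N.charpoly.Monic := Matrix.charpoly_monic N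
  have hdegpos : 0 < N.charpoly.degree := by
    rw [Polynomial.degree_eq_natDegree hmono.ne_zero, Matrix.charpoly_natDegree_eq_dim,
      Fintype.card_fin]
    exact_mod_cast hd
  have hlead : 0 ≤ N.charpoly.leadingCoeff := by
    rw [hmono.leadingCoeff]; norm_num
  obtain ⟨r, hrpos, hr0⟩ := exists_pos_root hdegpos hlead hneg
  exact ⟨(r : ℂ), root_transfer N r hr0, by simpa using hrpos⟩
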